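/- Let G be a finite directed acyclic graph. The minimum of the total number of labels |λ| = Σ_e |λ(e)|, taken over all labelings λ such that for every pair of vertices u, v there is a directed temporal path from u to v in (G,λ) if and only if there is a directed path from u to v in G, equals the number of irreducible arcs of G. -/

import Mathlib

open scoped Classical

variable {V : Type*}

/-- The vertices remaining after `i` rounds of repeatedly deleting all sources
(vertices of in-degree 0) from the digraph with arc relation `r`. -/
def remainAfter (r : V → V → Prop) : ℕ → Set V
  | 0 => Set.univ
  | (i + 1) => {v | v ∈ remainAfter r i ∧ ∃ u ∈ remainAfter r i, r u v}

/-- The `i`-th layer of the canonical layering of a DAG: the sources of the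
subgraph induced on the vertices remaining after `i` peeling rounds. -/
def canonicalLayer (r : V → V → Prop) (i : ℕ) : Set V :=
  {v | v ∈ remainAfter r i ∧ ∀ u ∈ remainAfter r i, ¬ r u v}

/-- The index of the canonical layer containing `v`. -/
noncomputable def layerIndex (r : V → V → Prop) (v : V) : ℕ :=
  sInf {i | v ∈ canonicalLayer r i}

/-- The relation `r` is acyclic: there is no directed cycle. -/
def RelAcyclic (r : V → V → Prop) : Prop :=
  ∀ v, ¬ Relation.TransGen r v v

/-- An arc `(u,v)` is irreducible if the only directed path from `u` to `v` is the arc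
itself, i.e. there is no directed path of length two or more from `u` to `v`. -/
def IrreducibleArc (r : V → V → Prop) (u v : V) : Prop :=
  r u v ∧ ¬ ∃ w, r u w ∧ Relation.TransGen r w v

/-- There is a directed temporal path from `u` to `v`: a directed path whose
consecutive arcs carry strictly increasing time-labels. -/
def DTemporalReach (r : V → V → Prop) (lab : V → V → Finset ℕ) (u v : V) : Prop :=
  ∃ (l : List V) (ts : List ℕ),
    List.Chain r u l ∧
    (u :: l).getLast (List.cons_ne_nil u l) = v ∧
    ts.Chain' (· < ·) ∧
    List.Forall₂ (fun t (p : V × V) => t ∈ lab p.1 p.2) ts ((u :: l).zip l)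

/-- The canonical labeling of a DAG: every irreducible arc `(u,v)` gets the single
label `j`, where `v` lies in layer `L_j`; all other arcs get no label. -/
noncomputable def canonicalLabeling (r : V → V → Prop) (u v : V) : Finset ℕ :=
  if IrreducibleArc r u v then {layerIndex r v} else ∅

-- ### auxiliary lemmas

lemma remainAfter_succ_subset (r : V → V → Prop) (i : ℕ) :
    remainAfter r (i + 1) ⊆ remainAfter r i := fun _ hv => hv.1

lemma remainAfter_antitone (r : V → V → Prop) {i j : ℕ} (h : i ≤ j) :
    remainAfter r j ⊆ remainAfter r i := by
  induction j with
  | zero => simp_all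
  | succ j ih =>
    rcases Nat.lt_or_ge i (j+1) with h' | h'
    · exact (remainAfter_succ_subset r j).trans (ih (Nat.lt_succ_iff.mp h'))
    · have : i = j + 1 := le_antisymm h h'
      subst this; exact subset_rfl

lemma remainAfter_closed (r : V → V → Prop) {u v : V} (huv : r u v) :
    ∀ {i : ℕ}, u ∈ remainAfter r i → v ∈ remainAfter r (i + 1) := by
  intro i
  induction i with
  | zero => intro _; exact ⟨trivial, u, trivial, huv⟩
  | succ i ih => intro hu; exact ⟨ih hu.1, u, hu, huv⟩

lemma wf_of_acyclic [Finite V] {r : V → V → Prop} (hacyc : RelAcyclic r) :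
    WellFounded r := by
  have : IsTrans V (Relation.TransGen r) := ⟨fun _ _ _ => Relation.TransGen.trans⟩
  have : IsIrrefl V (Relation.TransGen r) := ⟨hacyc⟩
  exact Subrelation.wf (fun h => Relation.TransGen.single h)
    (Finite.wellFounded_of_trans_of_irrefl (Relation.TransGen r))

lemma exists_not_remainAfter [Finite V] {r : V → V → Prop} (hacyc : RelAcyclic r) (v : V) :
    ∃ i, v ∉ remainAfter r i := by
  have := Fintype.ofFinite V
  induction v using (wf_of_acyclic hacyc).induction with
  | _ v ih =>
    classical
    set f : V → ℕ := fun u => sInf {i | u ∉ remainAfter r i} with hf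
    set N : ℕ := Finset.sup (Finset.univ.filter (fun u => r u v)) f with hN
    refine ⟨N + 1, fun hv => ?_⟩
    obtain ⟨_, u, hu, huv⟩ := hv
    have hne : {i | u ∉ remainAfter r i}.Nonempty := ih u huv
    have hmem : u ∉ remainAfter r (f u) := Nat.sInf_mem hne
    have hle : f u ≤ N := Finset.le_sup (by simp [huv])
    exact hmem (remainAfter_antitone r hle hu)

lemma exists_layer [Finite V] {r : V → V → Prop} (hacyc : RelAcyclic r) (v : V) :
    {i | v ∈ canonicalLayer r i}.Nonempty := by
  have hne : {i | v ∉ remainAfter r i}.Nonempty := exists_not_remainAfter hacyc v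
  have hmem : v ∉ remainAfter r (sInf {i | v ∉ remainAfter r i}) := Nat.sInf_mem hne
  have h0 : sInf {i | v ∉ remainAfter r i} ≠ 0 := by
    intro h; rw [h] at hmem; exact hmem trivial
  obtain ⟨j, hj0⟩ := Nat.exists_eq_succ_of_ne_zero h0
  rw [hj0] at hmem
  have hj : v ∈ remainAfter r j := by
    by_contra h
    have := Nat.sInf_le (show j ∈ {i | v ∉ remainAfter r i} from h)
    omega
  refine ⟨j, hj, fun u hu hru => hmem ⟨hj, u, hu, hru⟩⟩

lemma mem_layerIndex [Finite V] {r : V → V → Prop} (hacyc : RelAcyclic r) (v : V) :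
    v ∈ canonicalLayer r (layerIndex r v) := Nat.sInf_mem (exists_layer hacyc v)

lemma layerIndex_lt [Finite V] {r : V → V → Prop} (hacyc : RelAcyclic r) {u v : V}
    (huv : r u v) : layerIndex r u < layerIndex r v := by
  have hu := mem_layerIndex hacyc u
  have hv := mem_layerIndex hacyc v
  have hv1 : v ∈ remainAfter r (layerIndex r u + 1) := remainAfter_closed r huv hu.1
  by_contra h
  push_neg at h
  have : v ∈ remainAfter r (layerIndex r v + 1) :=
    remainAfter_antitone r (by omega) hv1
  obtain ⟨_, w, hw, hwv⟩ := this
  exact hv.2 w hw hwv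

lemma layerIndex_lt_trans [Finite V] {r : V → V → Prop} (hacyc : RelAcyclic r) {u v : V}
    (h : Relation.TransGen r u v) : layerIndex r u < layerIndex r v := by
  induction h with
  | single h => exact layerIndex_lt hacyc h
  | tail _ h ih => exact ih.trans (layerIndex_lt hacyc h)

lemma transGen_irreducible_aux [Finite V] {r : V → V → Prop} (hacyc : RelAcyclic r) :
    ∀ n : ℕ, ∀ u v : V, Relation.TransGen r u v →
      layerIndex r v - layerIndex r u ≤ n →
      Relation.TransGen (fun a b => IrreducibleArc r a b) u v := by
  intro n
  induction n using Nat.strong_induction_on with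
  | _ n ih =>
    intro u v h hle
    obtain ⟨w0, huw0, hw0v⟩ := Relation.TransGen.head'_iff.mp h
    rcases Relation.reflTransGen_iff_eq_or_transGen.mp hw0v with rfl | hwv
    · have huv : r u v := huw0
      by_cases hirr : IrreducibleArc r u v
      · exact Relation.TransGen.single hirr
      · have hw : ∃ w, r u w ∧ Relation.TransGen r w v := by
          by_contra hc; exact hirr ⟨huv, hc⟩
        obtain ⟨w, huw, hwv⟩ := hw
        have h1 : layerIndex r u < layerIndex r w := layerIndex_lt hacyc huw
        have h2 : layerIndex r w < layerIndex r v := layerIndex_lt_trans hacyc hwv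
        have g1 : layerIndex r w - layerIndex r u < n := by omega
        have g2 : layerIndex r v - layerIndex r w < n := by omega
        exact (ih _ g1 u w (Relation.TransGen.single huw) le_rfl).trans
          (ih _ g2 w v hwv le_rfl)
    · have h1 : layerIndex r u < layerIndex r w0 := layerIndex_lt hacyc huw0
      have h2 : layerIndex r w0 < layerIndex r v := layerIndex_lt_trans hacyc hwv
      have g1 : layerIndex r w0 - layerIndex r u < n := by omega
      have g2 : layerIndex r v - layerIndex r w0 < n := by omega
      exact (ih _ g1 u w0 (Relation.TransGen.single huw0) le_rfl).trans
        (ih _ g2 w0 v hwv le_rfl)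

lemma transGen_irreducible [Finite V] {r : V → V → Prop} (hacyc : RelAcyclic r) {u v : V}
    (h : Relation.TransGen r u v) :
    Relation.TransGen (fun a b => IrreducibleArc r a b) u v :=
  transGen_irreducible_aux hacyc _ u v h le_rfl

lemma forall2_canonical [Finite V] {r : V → V → Prop} :
    ∀ (u : V) (l : List V), List.Chain (IrreducibleArc r) u l →
      List.Forall₂ (fun t (p : V × V) => t ∈ canonicalLabeling r p.1 p.2)
        (l.map (layerIndex r)) ((u :: l).zip l) := by
  intro u l
  induction l generalizing u with
  | nil => intro _; simp
  | cons w l ih =>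
    intro h
    rw [List.Chain, List.chain_cons] at h
    simp only [List.map_cons, List.zip_cons_cons]
    exact List.Forall₂.cons (by simp [canonicalLabeling, h.1]) (ih w h.2)

lemma chain'_lt_canonical [Finite V] {r : V → V → Prop} (hacyc : RelAcyclic r) :
    ∀ (u : V) (l : List V), List.Chain (IrreducibleArc r) u l →
      List.Chain' (· < ·) (l.map (layerIndex r)) := by
  intro u l
  induction l generalizing u with
  | nil => intro _; simp [List.Chain']
  | cons w l ih =>
    intro h
    rw [List.Chain, List.chain_cons] at h
    cases l with
    | nil => simp [List.Chain']
    | cons x l' =>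
      rw [List.chain_cons] at h
      simp only [List.Chain', List.map_cons, List.isChain_cons_cons]
      exact ⟨layerIndex_lt hacyc h.2.1.1, by
        have := ih w (List.chain_cons.mpr h.2)
        simpa [List.Chain'] using this⟩

/-- For a finite DAG, the minimum total number of labels over all labelings that
preserve reachability (a directed temporal path from `u` to `v` exists iff a directed
path from `u` to `v` exists) equals the number of irreducible arcs. -/
theorem stmt11 [Fintype V] [DecidableEq V] (r : V → V → Prop) (hacyc : RelAcyclic r) :
    IsLeast {k : ℕ | ∃ lab : V → V → Finset ℕ,
        (∀ u v, ¬ r u v → lab u v = ∅) ∧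
        (∀ u v, ∀ t ∈ lab u v, 1 ≤ t) ∧
        (∀ u v : V, DTemporalReach r lab u v ↔ Relation.ReflTransGen r u v) ∧
        ∑ u : V, ∑ v : V, (lab u v).card = k}
      ((Finset.univ.filter fun p : V × V => IrreducibleArc r p.1 p.2).card) := by
  constructor
  · -- membership : the canonical labeling achieves the bound
    refine ⟨canonicalLabeling r, ?_, ?_, ?_, ?_⟩
    · intro u v h
      simp only [canonicalLabeling, if_neg (fun hirr : IrreducibleArc r u v => h hirr.1)]
    · intro u v t ht
      simp only [canonicalLabeling] at ht
      split at ht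
      · rename_i hirr
        simp only [Finset.mem_singleton] at ht
        subst ht
        have := layerIndex_lt hacyc hirr.1
        omega
      · simp at ht
    · intro u v
      constructor
      · rintro ⟨l, ts, hchain, hlast, -, -⟩
        exact List.relationReflTransGen_of_exists_isChain_cons l
          (List.IsChain.imp (fun a b h => h) hchain) hlast
      · intro h
        rcases Relation.reflTransGen_iff_eq_or_transGen.mp h with rfl | htg
        · exact ⟨[], [], List.Chain.nil, rfl, List.isChain_nil, by simp⟩
        · have hirr := transGen_irreducible hacyc htg
          obtain ⟨l, hchain, hlast⟩ :=
            List.exists_isChain_cons_of_relationReflTransGen hirr.to_reflTransGen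
          exact ⟨l, l.map (layerIndex r), hchain.imp (fun a b h => h.1), hlast,
            chain'_lt_canonical hacyc u l hchain, forall2_canonical u l hchain⟩
    · rw [Finset.card_filter, Fintype.sum_prod_type]
      refine Finset.sum_congr rfl fun u _ => Finset.sum_congr rfl fun v _ => ?_
      simp only [canonicalLabeling]
      split <;> simp
  · -- lower bound
    rintro k ⟨lab, h0, h1, hreach, rfl⟩
    rw [Finset.card_filter]
    rw [Fintype.sum_prod_type]
    refine Finset.sum_le_sum fun u _ => Finset.sum_le_sum fun v _ => ?_
    split
    · rename_i hirr
      have hdt : DTemporalReach r lab u v :=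
        (hreach u v).mpr (Relation.ReflTransGen.single hirr.1)
      obtain ⟨l, ts, hchain, hlast, -, hf2⟩ := hdt
      rcases l with _ | ⟨w, l'⟩
      · -- l = [], so u = v, contradicting acyclicity
        simp only [List.getLast_singleton] at hlast
        subst hlast
        exact absurd (Relation.TransGen.single hirr.1) (hacyc u)
      · rcases l' with _ | ⟨x, l''⟩
        · -- l = [w]; w = v and ts = [t] with t ∈ lab u v
          have hwv : w = v := by simpa using hlast
          subst hwv
          rcases List.forall₂_cons_right_iff.mp (by simpa using hf2) with ⟨t, ts', ht, -, rfl⟩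
          have : t ∈ lab u w := ht
          exact Nat.one_le_iff_ne_zero.mpr (fun hc => by
            simp [Finset.card_eq_zero] at hc
            rw [hc] at this; simp at this)
        · -- length ≥ 2 contradicts irreducibility
          exfalso
          rw [List.Chain, List.chain_cons, List.chain_cons] at hchain
          obtain ⟨huw, hwx, hchain''⟩ := hchain
          have hlast' : (x :: l'').getLast (List.cons_ne_nil x l'') = v := by
            rw [List.getLast_cons (List.cons_ne_nil w (x :: l'')),
              List.getLast_cons (List.cons_ne_nil x l'')] at hlast
            exact hlast
          have hxv : Relation.ReflTransGen r x v :=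
            List.relationReflTransGen_of_exists_isChain_cons l'' hchain'' hlast'
          exact hirr.2 ⟨w, huw, Relation.TransGen.head' hwx hxv⟩
    · exact Nat.zero_le _
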